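/- Let ⊢ be a regular entailment relation on a preordered commutative group G, and define the predicate R(A) := (A ⊢ {0}). Then R satisfies: (P1) R(A) whenever R(A') and A' ⊆ A; (P2) R(A + B) whenever R((A + B) ∪ A) and R((A + B) ∪ B); (P3) R({a}) whenever a ≤ 0; (P5) R({x, -x}) for all x in G. -/

import Mathlib

/-! Regularity with one summand equal to `0` gives `{z, z'} ⊢ {z - d, z' + d}`. Cutting the
points of `Z + d` with these pairs turns `(Z + d) ∪ Z ⊢ {d}` into `Z ⊢ {z - d, d, 0}` for every
`z ∈ Z`, and cutting the points of `Z - d` then turns `Z ∪ (Z - d) ⊢ {0}` into `Z ⊢ {d, 0}`.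
For (P2) take `Z = A + B` and `d = a ∈ A`: since `B ⊆ Z - a`, the hypothesis on `(A + B) ∪ B`
gives `A + B ⊢ {a, 0}`, and cutting the points of `A` from `(A + B) ∪ A ⊢ {0}` leaves
`A + B ⊢ {0}`. -/

open Finset Pointwise

/-- A regular entailment relation on a preordered commutative group `G`:
a relation between nonempty finite subsets of `G` satisfying weakening, cut,
`{a} ⊢ {b}` when `a ≤ b`, translation invariance, and regularity. -/
structure IsRegularEntailment {G : Type*} [AddCommGroup G] [Preorder G]
    [CovariantClass G G (· + ·) (· ≤ ·)] [DecidableEq G]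
    (r : Finset G → Finset G → Prop) : Prop where
  weaken : ∀ {A A' B B' : Finset G}, A'.Nonempty → B'.Nonempty →
    A' ⊆ A → B' ⊆ B → r A' B' → r A B
  cut : ∀ {A B : Finset G} (x : G), A.Nonempty → B.Nonempty →
    r (insert x A) B → r A (insert x B) → r A B
  of_le : ∀ {a b : G}, a ≤ b → r {a} {b}
  translate : ∀ {A B : Finset G} (x : G),
    r (A.image (· + x)) (B.image (· + x)) → r A B
  regular : ∀ a b x y : G, r {a + x, b + y} {a + b, x + y}

namespace IsRegularEntailment

variable {G : Type*} [AddCommGroup G] [Preorder G]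
    [CovariantClass G G (· + ·) (· ≤ ·)] [DecidableEq G]
    {r : Finset G → Finset G → Prop}

theorem image_add_right (hr : IsRegularEntailment r) {A B : Finset G} (t : G) (h : r A B) :
    r (A.image (· + t)) (B.image (· + t)) := by
  apply hr.translate (-t)
  simpa only [image_image, Function.comp_def, add_neg_cancel_right, image_id'] using h

theorem pair_sub_add (hr : IsRegularEntailment r) (z z' d : G) :
    r {z, z'} {z - d, z' + d} := by
  convert hr.regular z (-d) 0 (z' + d) using 2 <;> abel_nf

theorem cut_finset (hr : IsRegularEntailment r) {A B : Finset G} (C : Finset G)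
    (hA : A.Nonempty) (hB : B.Nonempty) (h : r (A ∪ C) B)
    (hC : ∀ c ∈ C, r A (insert c B)) : r A B := by
  induction C using Finset.induction_on with
  | empty => simpa using h
  | @insert c C _ ih =>
    refine ih ?_ fun c' hc' => hC c' (mem_insert_of_mem hc')
    refine hr.cut c (hA.mono subset_union_left) hB (by simpa [union_insert] using h) ?_
    exact hr.weaken hA (insert_nonempty _ _) subset_union_left subset_rfl
      (hC c (mem_insert_self _ _))

theorem triple_of_union_image_add (hr : IsRegularEntailment r) {Z : Finset G}
    (hZ : Z.Nonempty) {d z : G} (hz : z ∈ Z) (h : r (Z.image (· + d) ∪ Z) {d}) :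
    r Z {z - d, d, 0} := by
  refine hr.cut_finset (Z.image (· + d)) hZ (insert_nonempty _ _) ?_ ?_
  · exact hr.weaken (hZ.mono subset_union_right) (singleton_nonempty d)
      (union_comm _ _).subset (by simp) h
  · simp only [mem_image, forall_exists_index, and_imp, forall_apply_eq_imp_iff₂]
    intro z' hz'
    exact hr.weaken (insert_nonempty _ _) (insert_nonempty _ _)
      (insert_subset hz (singleton_subset_iff.mpr hz')) (by simp [insert_subset_iff])
      (hr.pair_sub_add z z' d)

theorem pair_zero_of_union_image_sub (hr : IsRegularEntailment r) {Z : Finset G}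
    (hZ : Z.Nonempty) (d : G) (h : r (Z ∪ Z.image (· - d)) {0}) : r Z {d, 0} := by
  have hd : r (Z.image (· + d) ∪ Z) {d} := by
    simpa [image_union, image_image, Function.comp_def] using hr.image_add_right d h
  refine hr.cut_finset (Z.image (· - d)) hZ (insert_nonempty _ _) ?_ ?_
  · exact hr.weaken (hZ.mono subset_union_left) (singleton_nonempty 0) subset_rfl (by simp) h
  · simp only [mem_image, forall_exists_index, and_imp, forall_apply_eq_imp_iff₂]
    exact fun z hz => hr.triple_of_union_image_add hZ hz hd

end IsRegularEntailment

theorem predicate_of_regular_entailment {G : Type*} [AddCommGroup G] [Preorder G]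
    [CovariantClass G G (· + ·) (· ≤ ·)] [DecidableEq G]
    (r : Finset G → Finset G → Prop) (hr : IsRegularEntailment r) :
    (∀ A A' : Finset G, A'.Nonempty → A' ⊆ A → r A' {0} → r A {0}) ∧
    (∀ A B : Finset G, A.Nonempty → B.Nonempty →
      r ((A + B) ∪ A) {0} → r ((A + B) ∪ B) {0} → r (A + B) {0}) ∧
    (∀ a : G, a ≤ 0 → r {a} {0}) ∧
    (∀ x : G, r {x, -x} {0}) := by
  refine ⟨fun A A' hA' hsub h => hr.weaken hA' (singleton_nonempty 0) hsub subset_rfl h,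
    fun A B hA hB hA_union hB_union => ?_, fun a ha => hr.of_le ha, fun x => ?_⟩
  · have hAB : (A + B).Nonempty := hA.add hB
    refine hr.cut_finset A hAB (singleton_nonempty 0) hA_union fun a ha => ?_
    have hB_sub : B ⊆ (A + B).image (· - a) := fun b hb =>
      mem_image.mpr ⟨a + b, add_mem_add ha hb, add_sub_cancel_left a b⟩
    exact hr.pair_zero_of_union_image_sub hAB a <| hr.weaken (hAB.mono subset_union_left)
      (singleton_nonempty 0) (union_subset_union subset_rfl hB_sub) subset_rfl hB_union
  · simpa using hr.regular x (-x) 0 0
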